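/- Let q : M → (1,∞) be a bounded measurable exponent and suppose u ∈ L^{q(·)}(M), v ∈ L^{q'(·)}(M) with ‖u‖_{q(·)} ≠ 0 and ‖v‖_{q'(·)} ≠ 0, where q' is the pointwise conjugate exponent. Then ∫_M (|u(x) v(x)|)/(‖u‖_{q(·)} ‖v‖_{q'(·)}) dμ(x) ≤ 1 + 1/q⁻ − 1/q⁺, where q⁻ = ess inf q, q⁺ = ess sup q. -/

import Mathlib

open MeasureTheory Filter Topology Real Set

/-- The modular of the variable exponent Lebesgue space. -/
noncomputable def vmodular {M : Type*} [MeasurableSpace M] (μ : Measure M) (q u : M → ℝ) : ℝ :=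
  ∫ x, |u x| ^ (q x) ∂μ

/-- The Luxemburg norm of the variable exponent Lebesgue space. -/
noncomputable def luxNorm {M : Type*} [MeasurableSpace M] (μ : Measure M) (q u : M → ℝ) : ℝ :=
  sInf {c : ℝ | 0 < c ∧ vmodular μ q (fun x => u x / c) ≤ 1}

/-- Membership in the variable exponent Lebesgue space `L^{q(·)}`. -/
def MemLq {M : Type*} [MeasurableSpace M] (μ : Measure M) (q u : M → ℝ) : Prop :=
  AEMeasurable u μ ∧ Integrable (fun x => |u x| ^ (q x)) μ

/-!
Young's inequality `ab ≤ a^q/q + b^{q'}/q'`, applied pointwise to `|u|/‖u‖` and `|v|/‖v‖` and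
combined with `1/q ≤ 1/q⁻` and `1/q' = 1 - 1/q ≤ 1 - 1/q⁺`, integrates to
`ρ_q(u/‖u‖)/q⁻ + (1 - 1/q⁺) ρ_{q'}(v/‖v‖)`. Both modulars are at most `1`: the modular of `u/c`
is at most `1` for every `c > ‖u‖`, since it decreases in `c`, and dominated convergence as
`c ↓ ‖u‖` passes this to the limit.
-/

namespace Real

lemma min_rpow_le_rpow {c a b t : ℝ} (hc : 0 < c) (hat : a ≤ t) (htb : t ≤ b) :
    min (c ^ a) (c ^ b) ≤ c ^ t := by
  rcases le_total 1 c with h1c | hc1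
  · exact (min_le_left _ _).trans (rpow_le_rpow_of_exponent_le h1c hat)
  · exact (min_le_right _ _).trans (rpow_le_rpow_of_exponent_ge hc hc1 htb)

lemma rpow_abs_div_le_rpow_abs_div {y c d t : ℝ} (hc : 0 < c) (hcd : c ≤ d) (ht : 0 ≤ t) :
    |y / d| ^ t ≤ |y / c| ^ t := by
  have hd : 0 < d := hc.trans_le hcd
  rw [abs_div, abs_div, abs_of_pos hc, abs_of_pos hd]
  gcongr

lemma conjExponent_le_conjExponent {p r : ℝ} (hp : 1 < p) (hpr : p ≤ r) :
    conjExponent r ≤ conjExponent p := by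
  rw [conjExponent, conjExponent, div_le_div_iff₀ (by linarith) (by linarith)]
  nlinarith

lemma mul_le_inv_mul_rpow_add_mul_rpow_conjExponent {a b s t r : ℝ} (ha : 0 ≤ a) (hb : 0 ≤ b)
    (hs : 1 < s) (hst : s ≤ t) (htr : t ≤ r) :
    a * b ≤ s⁻¹ * a ^ t + (1 - r⁻¹) * b ^ conjExponent t := by
  have hconj := HolderConjugate.conjExponent (hs.trans_le hst)
  calc a * b ≤ a ^ t / t + b ^ conjExponent t / conjExponent t :=
        young_inequality_of_nonneg ha hb hconj
    _ = t⁻¹ * a ^ t + (1 - t⁻¹) * b ^ conjExponent t := by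
        rw [← hconj.inv_add_inv_eq_one, add_sub_cancel_left, div_eq_inv_mul, div_eq_inv_mul]
    _ ≤ s⁻¹ * a ^ t + (1 - r⁻¹) * b ^ conjExponent t := by
        have hs₀ : 0 < s := by linarith
        have ht₀ : 0 < t := by linarith
        gcongr

end Real

lemma ae_le_essSup_of_ne_zero {M : Type*} [MeasurableSpace M] {μ : Measure M} {q : M → ℝ}
    (h : essSup q μ ≠ 0) : ∀ᵐ x ∂μ, q x ≤ essSup q μ :=
  ae_le_essSup (not_not.1 fun hq => h (Real.limsup_of_not_isBoundedUnder hq))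

lemma ae_essInf_le_of_ne_zero {M : Type*} [MeasurableSpace M] {μ : Measure M} {q : M → ℝ}
    (h : essInf q μ ≠ 0) : ∀ᵐ x ∂μ, essInf q μ ≤ q x :=
  ae_essInf_le (not_not.1 fun hq => h (Real.liminf_of_not_isBoundedUnder hq))

section VariableExponent

variable {M : Type*} [MeasurableSpace M] {μ : Measure M} {q u : M → ℝ} {a b : ℝ}

lemma integrable_rpow_abs_div (hu : MemLq μ q u) (hq : AEMeasurable q μ)
    (hqab : ∀ᵐ x ∂μ, q x ∈ Icc a b) {c : ℝ} (hc : 0 < c) :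
    Integrable (fun x => |u x / c| ^ q x) μ := by
  refine (hu.2.const_mul (min (c ^ a) (c ^ b))⁻¹).mono'
    ((hu.1.div_const c).abs.pow hq).aestronglyMeasurable ?_
  filter_upwards [hqab] with x ⟨hax, hxb⟩
  have hmin : 0 < min (c ^ a) (c ^ b) := lt_min (rpow_pos_of_pos hc a) (rpow_pos_of_pos hc b)
  rw [norm_of_nonneg (by positivity), abs_div, abs_of_pos hc, div_rpow (abs_nonneg _) hc.le,
    div_eq_inv_mul]
  gcongr
  exact min_rpow_le_rpow hc hax hxb

lemma luxNorm_nonneg : 0 ≤ luxNorm μ q u :=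
  Real.sInf_nonneg fun _ hc => hc.1.le

lemma luxNorm_pos (hn : luxNorm μ q u ≠ 0) : 0 < luxNorm μ q u :=
  luxNorm_nonneg.lt_of_ne' hn

lemma vmodular_div_le_one_of_luxNorm_lt (hu : MemLq μ q u) (hq : AEMeasurable q μ) (ha : 0 ≤ a)
    (hqab : ∀ᵐ x ∂μ, q x ∈ Icc a b) (hn : luxNorm μ q u ≠ 0) {c : ℝ} (hc : luxNorm μ q u < c) :
    vmodular μ q (fun x => u x / c) ≤ 1 := by
  have hne : {c : ℝ | 0 < c ∧ vmodular μ q (fun x => u x / c) ≤ 1}.Nonempty :=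
    nonempty_iff_ne_empty.2 fun h => hn (by rw [luxNorm, h, Real.sInf_empty])
  obtain ⟨s, ⟨hs, hmod⟩, hsc⟩ := exists_lt_of_csInf_lt hne hc
  refine le_trans (integral_mono_ae (integrable_rpow_abs_div hu hq hqab (hs.trans hsc))
    (integrable_rpow_abs_div hu hq hqab hs) ?_) hmod
  filter_upwards [hqab] with x hx
  exact rpow_abs_div_le_rpow_abs_div hs hsc.le (ha.trans hx.1)

lemma vmodular_div_luxNorm_le_one (hu : MemLq μ q u) (hq : AEMeasurable q μ) (ha : 0 ≤ a)
    (hqab : ∀ᵐ x ∂μ, q x ∈ Icc a b) (hn : luxNorm μ q u ≠ 0) :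
    vmodular μ q (fun x => u x / luxNorm μ q u) ≤ 1 := by
  have hL := luxNorm_pos hn
  have htend : Tendsto (fun c => vmodular μ q (fun x => u x / c)) (𝓝[>] luxNorm μ q u)
      (𝓝 (vmodular μ q (fun x => u x / luxNorm μ q u))) := by
    refine tendsto_integral_filter_of_dominated_convergence _
      (Eventually.of_forall fun c => ((hu.1.div_const c).abs.pow hq).aestronglyMeasurable)
      ?_ (integrable_rpow_abs_div hu hq hqab hL) ?_
    · filter_upwards [self_mem_nhdsWithin] with c hc
      filter_upwards [hqab] with x hx
      rw [norm_of_nonneg (by positivity)]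
      exact rpow_abs_div_le_rpow_abs_div hL (le_of_lt hc) (ha.trans hx.1)
    · filter_upwards [hqab] with x hx
      exact ((continuousAt_rpow_const _ _ (Or.inr (ha.trans hx.1))).tendsto.comp
        ((tendsto_const_nhds.div tendsto_id hL.ne').abs)).mono_left nhdsWithin_le_nhds
  exact le_of_tendsto htend (eventually_nhdsWithin_of_forall fun c hc =>
    vmodular_div_le_one_of_luxNorm_lt hu hq ha hqab hn hc)

theorem integral_abs_mul_div_luxNorm_le {v : M → ℝ} (hq : Measurable q) (ha : 1 < a)
    (hab : a ≤ b) (hqab : ∀ᵐ x ∂μ, q x ∈ Icc a b) (hu : MemLq μ q u)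
    (hv : MemLq μ (fun x => conjExponent (q x)) v) (hun : luxNorm μ q u ≠ 0)
    (hvn : luxNorm μ (fun x => conjExponent (q x)) v ≠ 0) :
    ∫ x, |u x * v x| / (luxNorm μ q u * luxNorm μ (fun x => conjExponent (q x)) v) ∂μ
      ≤ 1 + a⁻¹ - b⁻¹ := by
  set q' := fun x => conjExponent (q x)
  set Lu := luxNorm μ q u
  set Lv := luxNorm μ q' v
  have hLu : 0 < Lu := luxNorm_pos hun
  have hLv : 0 < Lv := luxNorm_pos hvn
  have hq' : Measurable q' := by simp only [q', conjExponent]; fun_prop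
  have hq'ab : ∀ᵐ x ∂μ, q' x ∈ Icc (conjExponent b) (conjExponent a) := by
    filter_upwards [hqab] with x ⟨hax, hxb⟩
    exact ⟨conjExponent_le_conjExponent (ha.trans_le hax) hxb, conjExponent_le_conjExponent ha hax⟩
  have hmod_u := vmodular_div_luxNorm_le_one hu hq.aemeasurable (by linarith) hqab hun
  have hmod_v := vmodular_div_luxNorm_le_one hv hq'.aemeasurable
    (HolderConjugate.conjExponent (ha.trans_le hab)).symm.nonneg hq'ab hvn
  have hint_u := integrable_rpow_abs_div hu hq.aemeasurable hqab hLu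
  have hint_v := integrable_rpow_abs_div hv hq'.aemeasurable hq'ab hLv
  have hyoung : ∀ᵐ x ∂μ, |u x * v x| / (Lu * Lv)
      ≤ a⁻¹ * |u x / Lu| ^ q x + (1 - b⁻¹) * |v x / Lv| ^ q' x := by
    filter_upwards [hqab] with x ⟨hax, hxb⟩
    rw [abs_mul, mul_div_mul_comm, abs_div, abs_div, abs_of_pos hLu, abs_of_pos hLv]
    exact mul_le_inv_mul_rpow_add_mul_rpow_conjExponent (by positivity) (by positivity) ha hax hxb
  have hb : 0 ≤ 1 - b⁻¹ := sub_nonneg.2 (inv_le_one_of_one_le₀ (by linarith))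
  calc ∫ x, |u x * v x| / (Lu * Lv) ∂μ
      ≤ ∫ x, a⁻¹ * |u x / Lu| ^ q x + (1 - b⁻¹) * |v x / Lv| ^ q' x ∂μ :=
        integral_mono_of_nonneg
          (Eventually.of_forall fun x => div_nonneg (abs_nonneg _) (mul_pos hLu hLv).le)
          ((hint_u.const_mul _).add (hint_v.const_mul _)) hyoung
    _ = a⁻¹ * vmodular μ q (fun x => u x / Lu)
          + (1 - b⁻¹) * vmodular μ q' (fun x => v x / Lv) := by
        rw [integral_add (hint_u.const_mul _) (hint_v.const_mul _), integral_const_mul,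
          integral_const_mul, vmodular, vmodular]
    _ ≤ a⁻¹ * 1 + (1 - b⁻¹) * 1 := by gcongr
    _ = 1 + a⁻¹ - b⁻¹ := by ring

end VariableExponent

/-- Intermediate inequality in the proof of the variable exponent Hölder inequality:
for normalized `u` and `v`, `∫ |u v|/(‖u‖‖v‖) ≤ 1 + 1/q⁻ − 1/q⁺`. -/
theorem normalized_holder_estimate
    {M : Type*} [MeasurableSpace M] (μ : Measure M)
    (q : M → ℝ) (hq : Measurable q)
    (qm qp : ℝ) (hqm : qm = essInf q μ) (hqp : qp = essSup q μ)
    (h1 : 1 < qm) (h2 : qm ≤ qp)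
    (q' : M → ℝ) (hq' : ∀ x, q' x = q x / (q x - 1))
    (u v : M → ℝ) (hu : MemLq μ q u) (hv : MemLq μ q' v)
    (hun : luxNorm μ q u ≠ 0) (hvn : luxNorm μ q' v ≠ 0) :
    ∫ x, |u x * v x| / (luxNorm μ q u * luxNorm μ q' v) ∂μ ≤ 1 + 1 / qm - 1 / qp := by
  -- `1 < qm ≤ qp` excludes the junk value `0` of `essInf`/`essSup` of an unbounded function.
  have hbdd : ∀ᵐ x ∂μ, q x ∈ Icc qm qp := by
    subst hqm hqp
    filter_upwards [ae_essInf_le_of_ne_zero (by linarith), ae_le_essSup_of_ne_zero (by linarith)]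
      with x hlow hup using ⟨hlow, hup⟩
  obtain rfl : q' = fun x => conjExponent (q x) := funext hq'
  simpa only [one_div] using integral_abs_mul_div_luxNorm_le hq h1 h2 hbdd hu hv hun hvn
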